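/- arXiv:2409.10924 — 2 statements merged into one kernel-verified Lean document; each statement's English description precedes it below -/
import Mathlib

section
/- For any sequences x ∈ Z_q^n, y ∈ Z_q^m and any path P in G_{x,y} from v_{n,m} to v_{0,0}, deleting from y the positions f_I(P) (second indices of type-3 arcs in P) yields the same sequence as deleting from x the positions f_D(P) (first indices of type-1 arcs in P): D_{f_I(P)}(y) = D_{f_D(P)}(x). -/
open Classical

variable {α : Type*}

/-- One single-symbol insertion or deletion step between sequences. -/
def EditStep (x y : List α) : Prop :=
  (∃ i a, y = x.insertIdx i a) ∨ (∃ i a, x = y.insertIdx i a)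

/-- The indel distance: the minimum number of single-symbol insertions and
deletions transforming `x` into `y`. -/
noncomputable def indel (x y : List α) : ℕ :=
  sInf {n | ∃ f : ℕ → List α, f 0 = x ∧ f n = y ∧ ∀ i < n, EditStep (f i) (f (i + 1))}

/-- The indel-distance table `h i j = d(x_[1..i], y_[1..j])`. -/
noncomputable def hh (x y : List α) (i j : ℕ) : ℕ :=
  indel (x.take i) (y.take j)

/-- Delete the (1-indexed) positions in the finite set `S` from `x`. -/
def delF (x : List α) (S : Finset ℕ) : List α :=
  ((x.zipIdx.map Prod.swap).filter fun p => p.1 + 1 ∉ S).map Prod.snd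

/-- Delete the (1-indexed) positions in the set `S` from `x`. -/
noncomputable def delS (x : List α) (S : Set ℕ) : List α :=
  ((x.zipIdx.map Prod.swap).filter fun p => decide (p.1 + 1 ∉ S)).map Prod.snd

/-- Type-1 arc `(v_{i,j}, v_{i-1,j})` when `h i j = h (i-1) j + 1`. -/
def IsArc1 (x y : List α) (p q : ℕ × ℕ) : Prop :=
  1 ≤ p.1 ∧ p.1 ≤ x.length ∧ p.2 ≤ y.length ∧ q = (p.1 - 1, p.2) ∧
    hh x y p.1 p.2 = hh x y (p.1 - 1) p.2 + 1

/-- Type-2 arc `(v_{i,j}, v_{i-1,j-1})` when `x_i = y_j`. -/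
def IsArc2 (x y : List α) (p q : ℕ × ℕ) : Prop :=
  1 ≤ p.1 ∧ p.1 ≤ x.length ∧ 1 ≤ p.2 ∧ p.2 ≤ y.length ∧ q = (p.1 - 1, p.2 - 1) ∧
    x[p.1 - 1]? = y[p.2 - 1]?

/-- Type-3 arc `(v_{i,j}, v_{i,j-1})` when `h i j = h i (j-1) + 1`. -/
def IsArc3 (x y : List α) (p q : ℕ × ℕ) : Prop :=
  p.1 ≤ x.length ∧ 1 ≤ p.2 ∧ p.2 ≤ y.length ∧ q = (p.1, p.2 - 1) ∧
    hh x y p.1 p.2 = hh x y p.1 (p.2 - 1) + 1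

/-- Arcs of the digraph `G_{x,y}`. -/
def IsArc (x y : List α) (p q : ℕ × ℕ) : Prop :=
  IsArc1 x y p q ∨ IsArc2 x y p q ∨ IsArc3 x y p q

/-- `P` is a path in `G_{x,y}` from `v_{n,m}` to `v_{0,0}`. -/
def IsPath (x y : List α) (P : List (ℕ × ℕ)) : Prop :=
  P.Chain' (IsArc x y) ∧ P.head? = some (x.length, y.length) ∧ P.getLast? = some (0, 0)

/-- Number of arcs of a path `P` satisfying the arc predicate `A`. -/
noncomputable def countArc (A : ℕ × ℕ → ℕ × ℕ → Prop) (P : List (ℕ × ℕ)) : ℕ :=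
  (P.zip P.tail).countP fun pq => decide (A pq.1 pq.2)

/-- First indices of the type-1 arcs of `P`. -/
def fD (x y : List α) (P : List (ℕ × ℕ)) : Set ℕ :=
  { i | ∃ pq ∈ P.zip P.tail, IsArc1 x y pq.1 pq.2 ∧ pq.1.1 = i }

/-- Second indices of the type-3 arcs of `P`. -/
def fI (x y : List α) (P : List (ℕ × ℕ)) : Set ℕ :=
  { j | ∃ pq ∈ P.zip P.tail, IsArc3 x y pq.1 pq.2 ∧ pq.1.2 = j }

/-- The single-deletion ball of `x`. -/
def delBall (x : List α) : Set (List α) :=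
  { z | ∃ j, 1 ≤ j ∧ j ≤ x.length ∧ z = delF x {j} }

/-- `L^{(1)}(x)`: sequences (other than `x`) obtained from `x` by a single
insertion followed by a single deletion. -/
def L1 (x : List α) : Set (List α) :=
  { y | y ≠ x ∧ ∃ s, 1 ≤ s ∧ s ≤ x.length + 1 ∧ ∃ a : α, ∃ j, 1 ≤ j ∧ j ≤ x.length + 1 ∧
      y = delF (x.insertIdx (s - 1) a) {j} }

/-- `x ∈ E_{n,q,t}`: any `t` deletion positions are uniquely detectable. -/
def Detects (x : List α) (t : ℕ) : Prop :=
  ∀ S S' : Finset ℕ, S ⊆ Finset.Icc 1 x.length → S' ⊆ Finset.Icc 1 x.length →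
    S.card = t → S'.card = t → delF x S = delF x S' → S = S'

/-- `x` with the adjacent (1-indexed) symbols `x_i` and `x_{i+1}` swapped. -/
def swapAdj (x : List α) (i : ℕ) : List α :=
  x.take (i - 1) ++ ((x.drop (i - 1)).take 2).reverse ++ x.drop (i + 1)

/-- The partial order on paths of `G_{x,y}`. -/
def PathLE (P Q : List (ℕ × ℕ)) : Prop :=
  ∀ j : ℕ, sInf {i | (i, j) ∈ P} ≤ sInf {i | (i, j) ∈ Q} ∧
    sSup {i | (i, j) ∈ P} ≤ sSup {i | (i, j) ∈ Q}

/-- The Wagner–Fischer matrix. -/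
def wfH [DecidableEq α] (x y : List α) : ℕ → ℕ → ℕ
  | i, 0 => i
  | 0, j + 1 => j + 1
  | i + 1, j + 1 =>
      min (wfH x y (i + 1) j + 1)
        (min (wfH x y i (j + 1) + 1)
          (wfH x y i j + if x[i]? = y[j]? then 0 else 2))

/-! Each suffix of the path, from some `v_{i,j}` down to `v_{0,0}`, already satisfies the identity
for the prefixes `x_1 ⋯ x_i` and `y_1 ⋯ y_j`. Prepending an arc `(v_{i,j}, v_{i-1,j})` of type 1
lengthens the prefix of `x` by `x_i` but puts `i` into `f_D`, so `x_i` is deleted again; type 3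
is symmetric. A type-2 arc appends `x_i = y_j` to both sides, and neither copy is deleted since
the rest of the path never leaves the rectangle below `v_{i-1,j-1}`. -/

lemma delS_congr {z : List α} {S T : Set ℕ} (h : ∀ k < z.length, k + 1 ∈ S ↔ k + 1 ∈ T) :
    delS z S = delS z T := by
  unfold delS
  congr 1
  refine List.filter_congr fun p hp => ?_
  obtain ⟨q, hq, rfl⟩ := List.mem_map.mp hp
  simp [h q.2 (List.snd_lt_of_mem_zipIdx hq)]

lemma delS_insert_of_length_lt {z : List α} {k : ℕ} (S : Set ℕ) (hk : z.length < k) :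
    delS z (insert k S) = delS z S :=
  delS_congr fun i hi => by simp [show i + 1 ≠ k by omega]

lemma delS_append_singleton (z : List α) (a : α) (S : Set ℕ) :
    delS (z ++ [a]) S = delS z S ++ if z.length + 1 ∈ S then [] else [a] := by
  unfold delS
  by_cases h : z.length + 1 ∈ S <;> simp [List.zipIdx_append, h]

lemma delS_take_add_one (z : List α) (S : Set ℕ) (i : ℕ) :
    delS (z.take (i + 1)) S = delS (z.take i) S ++ if i + 1 ∈ S then [] else z[i]?.toList := by
  rw [List.take_add_one]
  cases hz : z[i]? with
  | none => simp
  | some a =>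
    have hi : (z.take i).length = i := List.length_take_of_le (List.getElem?_eq_some_iff.mp hz).1.le
    simpa [hi] using delS_append_singleton (z.take i) a S

lemma delS_take_add_one_of_mem {z : List α} {S : Set ℕ} {i : ℕ} (h : i + 1 ∈ S) :
    delS (z.take (i + 1)) S = delS (z.take i) S := by
  simp [delS_take_add_one, h]

lemma delS_take_add_one_of_notMem {z : List α} {S : Set ℕ} {i : ℕ} (h : i + 1 ∉ S) :
    delS (z.take (i + 1)) S = delS (z.take i) S ++ z[i]?.toList := by
  simp [delS_take_add_one, h]

section

variable {x y : List α}

lemma IsArc.le {p q : ℕ × ℕ} (h : IsArc x y p q) : q ≤ p := by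
  rcases h with ⟨-, -, -, rfl, -⟩ | ⟨-, -, -, -, rfl, -⟩ | ⟨-, -, -, rfl, -⟩ <;>
    exact Prod.mk_le_mk.mpr ⟨by omega, by omega⟩

lemma le_of_mem_of_isChain_isArc {p r : ℕ × ℕ} {P : List (ℕ × ℕ)}
    (hc : (p :: P).IsChain (IsArc x y)) (hr : r ∈ p :: P) : r ≤ p := by
  have hc : (p :: P).IsChain (· ≥ ·) := hc.imp fun _ _ h => h.le
  rcases List.mem_cons.mp hr with rfl | hr
  · exact le_rfl
  · exact (List.pairwise_cons.mp (List.isChain_iff_pairwise.mp hc)).1 r hr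

lemma not_isArc1_of_snd_ne {p q : ℕ × ℕ} (h : q.2 ≠ p.2) : ¬IsArc1 x y p q :=
  fun ⟨_, _, _, hq, _⟩ => h (by rw [hq])

lemma not_isArc3_of_fst_ne {p q : ℕ × ℕ} (h : q.1 ≠ p.1) : ¬IsArc3 x y p q :=
  fun ⟨_, _, _, hq, _⟩ => h (by rw [hq])

lemma fD_cons_cons (p q : ℕ × ℕ) (r : List (ℕ × ℕ)) :
    fD x y (p :: q :: r) = {a | IsArc1 x y p q ∧ p.1 = a} ∪ fD x y (q :: r) := by
  ext a
  simp [fD]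

lemma fI_cons_cons (p q : ℕ × ℕ) (r : List (ℕ × ℕ)) :
    fI x y (p :: q :: r) = {a | IsArc3 x y p q ∧ p.2 = a} ∪ fI x y (q :: r) := by
  ext a
  simp [fI]

lemma fD_le {p : ℕ × ℕ} {P : List (ℕ × ℕ)} (hc : (p :: P).IsChain (IsArc x y)) {a : ℕ}
    (ha : a ∈ fD x y (p :: P)) : a ≤ p.1 := by
  obtain ⟨pq, hpq, -, rfl⟩ := ha
  exact (le_of_mem_of_isChain_isArc hc (List.of_mem_zip hpq).1).1

lemma fI_le {p : ℕ × ℕ} {P : List (ℕ × ℕ)} (hc : (p :: P).IsChain (IsArc x y)) {a : ℕ}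
    (ha : a ∈ fI x y (p :: P)) : a ≤ p.2 := by
  obtain ⟨pq, hpq, -, rfl⟩ := ha
  exact (le_of_mem_of_isChain_isArc hc (List.of_mem_zip hpq).1).2

lemma delS_take_fI_eq_of_isArc1 {k j : ℕ} {r : List (ℕ × ℕ)}
    (h : IsArc1 x y (k + 1, j) (k, j))
    (ih : delS (y.take j) (fI x y ((k, j) :: r)) = delS (x.take k) (fD x y ((k, j) :: r))) :
    delS (y.take j) (fI x y ((k + 1, j) :: (k, j) :: r)) =
      delS (x.take (k + 1)) (fD x y ((k + 1, j) :: (k, j) :: r)) := by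
  have hD : fD x y ((k + 1, j) :: (k, j) :: r) = insert (k + 1) (fD x y ((k, j) :: r)) := by
    ext a
    simp [fD_cons_cons, h, eq_comm]
  have hI : fI x y ((k + 1, j) :: (k, j) :: r) = fI x y ((k, j) :: r) := by
    simp [fI_cons_cons, not_isArc3_of_fst_ne]
  calc delS (y.take j) (fI x y ((k + 1, j) :: (k, j) :: r))
      = delS (x.take k) (fD x y ((k, j) :: r)) := by rw [hI, ih]
    _ = delS (x.take k) (insert (k + 1) (fD x y ((k, j) :: r))) :=
      (delS_insert_of_length_lt _ (by simp)).symm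
    _ = delS (x.take (k + 1)) (fD x y ((k + 1, j) :: (k, j) :: r)) := by
      rw [hD, delS_take_add_one_of_mem (Set.mem_insert _ _)]

lemma delS_take_fI_eq_of_isArc3 {i l : ℕ} {r : List (ℕ × ℕ)}
    (h : IsArc3 x y (i, l + 1) (i, l))
    (ih : delS (y.take l) (fI x y ((i, l) :: r)) = delS (x.take i) (fD x y ((i, l) :: r))) :
    delS (y.take (l + 1)) (fI x y ((i, l + 1) :: (i, l) :: r)) =
      delS (x.take i) (fD x y ((i, l + 1) :: (i, l) :: r)) := by
  have hI : fI x y ((i, l + 1) :: (i, l) :: r) = insert (l + 1) (fI x y ((i, l) :: r)) := by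
    ext a
    simp [fI_cons_cons, h, eq_comm]
  have hD : fD x y ((i, l + 1) :: (i, l) :: r) = fD x y ((i, l) :: r) := by
    simp [fD_cons_cons, not_isArc1_of_snd_ne]
  calc delS (y.take (l + 1)) (fI x y ((i, l + 1) :: (i, l) :: r))
      = delS (y.take l) (insert (l + 1) (fI x y ((i, l) :: r))) := by
        rw [hI, delS_take_add_one_of_mem (Set.mem_insert _ _)]
    _ = delS (y.take l) (fI x y ((i, l) :: r)) := delS_insert_of_length_lt _ (by simp)
    _ = delS (x.take i) (fD x y ((i, l + 1) :: (i, l) :: r)) := by rw [hD, ih]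

lemma delS_take_fI_eq_of_isArc2 {k l : ℕ} {r : List (ℕ × ℕ)}
    (h : IsArc2 x y (k + 1, l + 1) (k, l)) (hc : ((k, l) :: r).IsChain (IsArc x y))
    (ih : delS (y.take l) (fI x y ((k, l) :: r)) = delS (x.take k) (fD x y ((k, l) :: r))) :
    delS (y.take (l + 1)) (fI x y ((k + 1, l + 1) :: (k, l) :: r)) =
      delS (x.take (k + 1)) (fD x y ((k + 1, l + 1) :: (k, l) :: r)) := by
  have hD : fD x y ((k + 1, l + 1) :: (k, l) :: r) = fD x y ((k, l) :: r) := by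
    simp [fD_cons_cons, not_isArc1_of_snd_ne]
  have hI : fI x y ((k + 1, l + 1) :: (k, l) :: r) = fI x y ((k, l) :: r) := by
    simp [fI_cons_cons, not_isArc3_of_fst_ne]
  have hk : k + 1 ∉ fD x y ((k, l) :: r) := fun hk => by simpa using fD_le hc hk
  have hl : l + 1 ∉ fI x y ((k, l) :: r) := fun hl => by simpa using fI_le hc hl
  obtain ⟨-, -, -, -, -, hxy⟩ := h
  simp only [Nat.add_sub_cancel] at hxy
  rw [hD, hI, delS_take_add_one_of_notMem hk, delS_take_add_one_of_notMem hl, ih, hxy]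

lemma delS_take_fI_eq_delS_take_fD {p : ℕ × ℕ} {P : List (ℕ × ℕ)}
    (hc : (p :: P).IsChain (IsArc x y)) (hl : (p :: P).getLast? = some (0, 0)) :
    delS (y.take p.2) (fI x y (p :: P)) = delS (x.take p.1) (fD x y (p :: P)) := by
  induction P generalizing p with
  | nil =>
    obtain rfl : p = (0, 0) := by simpa using hl
    simp [delS]
  | cons q r ih =>
    obtain ⟨harc, hrest⟩ := List.isChain_cons_cons.mp hc
    have ih := ih hrest (by simpa using hl)
    obtain ⟨i, j⟩ := p
    rcases harc with h | h | h
    · have ⟨hi, _, _, hq, _⟩ := h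
      obtain ⟨k, rfl⟩ := Nat.exists_eq_add_one.mpr hi
      obtain rfl : q = (k, j) := by simpa using hq
      exact delS_take_fI_eq_of_isArc1 h ih
    · have ⟨hi, _, hj, _, hq, _⟩ := h
      obtain ⟨k, rfl⟩ := Nat.exists_eq_add_one.mpr hi
      obtain ⟨l, rfl⟩ := Nat.exists_eq_add_one.mpr hj
      obtain rfl : q = (k, l) := by simpa using hq
      exact delS_take_fI_eq_of_isArc2 h hrest ih
    · have ⟨_, hj, _, hq, _⟩ := h
      obtain ⟨l, rfl⟩ := Nat.exists_eq_add_one.mpr hj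
      obtain rfl : q = (i, l) := by simpa using hq
      exact delS_take_fI_eq_of_isArc3 h ih

end

/-- `D_{f_I(P)}(y) = D_{f_D(P)}(x)` for any path `P` in `G_{x,y}`. -/
theorem del_fI_eq_del_fD {α : Type*} (x y : List α) (P : List (ℕ × ℕ))
    (hP : IsPath x y P) :
    delS y (fI x y P) = delS x (fD x y P) := by
  obtain ⟨hc, hhead, hlast⟩ := hP
  obtain ⟨P, rfl⟩ := List.head?_eq_some_iff.mp hhead
  simpa using delS_take_fI_eq_delS_take_fD hc hlast
end

section
/- For x ∈ Z_q^n and y ∈ L^{(1)}(x) (so d(x,y) = 2 and len(y) = n), every path P in G_{x,y} from v_{n,n} to v_{0,0} contains exactly one type-1 arc and exactly one type-3 arc; hence |f_I(P)| = |f_D(P)| = 1. -/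
/-!
Every arc of `G_{x,y}` lowers the first coordinate by one exactly when it has type 1 or 2, the
second exactly when it has type 2 or 3, and the table entry `h` exactly when it has type 1 or 3:
type-2 arcs keep `h`, because appending a common symbol to both words leaves
`d(u, v) = |u| + |v| - 2 lcs(u, v)` unchanged. Summing along a path from `v_{n,n}` to `v_{0,0}`,
the numbers of type-1 and type-3 arcs are equal and add up to `h_{n,n} = d(x, y)`, which is
at most 2 (one insertion, one deletion) and nonzero because `y ≠ x`.
-/

open Classical

variable {α : Type*}

def ReachesIn (m : ℕ) (u v : List α) : Prop :=
  ∃ f : ℕ → List α, f 0 = u ∧ f m = v ∧ ∀ i < m, EditStep (f i) (f (i + 1))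

namespace ReachesIn

theorem refl (u : List α) : ReachesIn 0 u u :=
  ⟨fun _ => u, rfl, rfl, fun _ hi => absurd hi (Nat.not_lt_zero _)⟩

theorem eq_of_zero {u v : List α} (h : ReachesIn 0 u v) : u = v := by
  obtain ⟨f, h0, hm, -⟩ := h
  rw [← h0, hm]

theorem cons {m : ℕ} {u w v : List α} (h : EditStep u w) (hr : ReachesIn m w v) :
    ReachesIn (m + 1) u v := by
  obtain ⟨f, h0, hm, hs⟩ := hr
  refine ⟨fun i => if i = 0 then u else f (i - 1), by simp, by simp [hm], ?_⟩
  rintro (_ | i) hi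
  · simpa [h0] using h
  · simpa using hs i (by omega)

theorem exists_of_succ {m : ℕ} {u v : List α} (h : ReachesIn (m + 1) u v) :
    ∃ w, EditStep u w ∧ ReachesIn m w v := by
  obtain ⟨f, h0, hm, hs⟩ := h
  exact ⟨f 1, h0 ▸ hs 0 (by omega), fun i => f (i + 1), rfl, hm, fun i hi => hs (i + 1) (by omega)⟩

theorem trans {m k : ℕ} {u v w : List α} (h₁ : ReachesIn m u v) (h₂ : ReachesIn k v w) :
    ReachesIn (m + k) u w := by
  induction m generalizing u with
  | zero => rwa [h₁.eq_of_zero, Nat.zero_add]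
  | succ n ih =>
    obtain ⟨t, hstep, hr⟩ := h₁.exists_of_succ
    rw [Nat.add_right_comm]
    exact cons hstep (ih hr)

theorem symm {m : ℕ} {u v : List α} (h : ReachesIn m u v) : ReachesIn m v u := by
  induction m generalizing u with
  | zero => rw [h.eq_of_zero]; exact refl v
  | succ n ih =>
    obtain ⟨t, hstep, hr⟩ := h.exists_of_succ
    exact (ih hr).trans (cons (hstep.elim Or.inr Or.inl) (refl u))

end ReachesIn

theorem List.Sublist.exists_lt_sublist_eraseIdx {s w : List α} (h : s.Sublist w) (hne : s ≠ w) :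
    ∃ i < w.length, s.Sublist (w.eraseIdx i) := by
  induction h with
  | slnil => exact absurd rfl hne
  | cons a h => exact ⟨0, by simp, by simpa using h⟩
  | @cons_cons l₁ l₂ a h ih =>
    obtain ⟨i, hi, hsub⟩ := ih fun hl => hne (hl ▸ rfl)
    exact ⟨i + 1, by simpa using hi, by simpa using hsub.cons_cons a⟩

theorem editStep_eraseIdx {w : List α} {i : ℕ} (h : i < w.length) : EditStep w (w.eraseIdx i) :=
  Or.inr ⟨i, w[i], (List.insertIdx_eraseIdx_getElem h).symm⟩

theorem reachesIn_of_sublist {s w : List α} (h : s.Sublist w) :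
    ReachesIn (w.length - s.length) w s := by
  generalize hn : w.length - s.length = n
  induction n generalizing w with
  | zero =>
    rw [h.eq_of_length_le (by omega)]
    exact ReachesIn.refl w
  | succ n ih =>
    obtain ⟨i, hi, hsub⟩ := h.exists_lt_sublist_eraseIdx (by rintro rfl; omega)
    have hlen : (w.eraseIdx i).length = w.length - 1 := List.length_eraseIdx_of_lt hi
    exact (ih hsub (by omega)).cons (editStep_eraseIdx hi)

theorem indel_le {m : ℕ} {u v : List α} (h : ReachesIn m u v) : indel u v ≤ m :=
  Nat.sInf_le h

theorem reachesIn_indel (u v : List α) : ReachesIn (indel u v) u v := by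
  have hu := reachesIn_of_sublist u.nil_sublist
  have hv := reachesIn_of_sublist v.nil_sublist
  exact Nat.sInf_mem (s := {m | ReachesIn m u v}) ⟨_, hu.trans hv.symm⟩

theorem eq_of_indel_eq_zero {u v : List α} (h : indel u v = 0) : u = v :=
  (h ▸ reachesIn_indel u v).eq_of_zero

theorem EditStep.eq_or_eraseIdx {u w : List α} (h : EditStep u w) :
    u = w ∨ (∃ i < w.length, u = w.eraseIdx i) ∨ ∃ i < u.length, w = u.eraseIdx i := by
  rcases h with ⟨i, a, rfl⟩ | ⟨i, a, rfl⟩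
  · rcases le_or_gt i u.length with hi | hi
    · exact Or.inr (Or.inl ⟨i, by simp [List.length_insertIdx, hi], by simp⟩)
    · exact Or.inl (List.insertIdx_of_length_lt hi).symm
  · rcases le_or_gt i w.length with hi | hi
    · exact Or.inr (Or.inr ⟨i, by simp [List.length_insertIdx, hi], by simp⟩)
    · exact Or.inl (List.insertIdx_of_length_lt hi)

theorem List.Sublist.exists_sublist_sublist_eraseIdx {s w : List α} (h : s.Sublist w) (i : ℕ) :
    ∃ t : List α, t.Sublist s ∧ t.Sublist (w.eraseIdx i) ∧ s.length ≤ t.length + 1 := by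
  rw [← List.take_append_drop i w, List.sublist_append_iff] at h
  obtain ⟨s₁, s₂, rfl, h₁, h₂⟩ := h
  refine ⟨s₁ ++ s₂.tail, s₂.tail_sublist.append_left s₁, ?_, ?_⟩
  · rw [List.eraseIdx_eq_take_drop_succ, ← List.tail_drop]
    exact h₁.append h₂.tail
  · simp only [List.length_append, List.length_tail]
    omega

theorem List.Sublist.dropLast_of_append_singleton {s u : List α} {a : α}
    (h : s.Sublist (u ++ [a])) :
    s.dropLast.Sublist u := by
  simpa using h.reverse.tail

def commonSubseqLengths (u v : List α) : Set ℕ :=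
  {n | ∃ s : List α, s.Sublist u ∧ s.Sublist v ∧ s.length = n}

theorem bddAbove_commonSubseqLengths (u v : List α) : BddAbove (commonSubseqLengths u v) :=
  ⟨u.length, by rintro _ ⟨s, hu, -, rfl⟩; exact hu.length_le⟩

noncomputable def lcs (u v : List α) : ℕ :=
  sSup (commonSubseqLengths u v)

theorem exists_lcs (u v : List α) :
    ∃ s : List α, s.Sublist u ∧ s.Sublist v ∧ s.length = lcs u v :=
  Nat.sSup_mem (s := commonSubseqLengths u v) ⟨0, [], u.nil_sublist, v.nil_sublist, rfl⟩
    (bddAbove_commonSubseqLengths u v)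

theorem le_lcs {s u v : List α} (hu : s.Sublist u) (hv : s.Sublist v) : s.length ≤ lcs u v :=
  le_csSup (bddAbove_commonSubseqLengths u v) ⟨s, hu, hv, rfl⟩

theorem lcs_le_length_left (u v : List α) : lcs u v ≤ u.length := by
  obtain ⟨s, hu, -, hs⟩ := exists_lcs u v
  exact hs ▸ hu.length_le

theorem lcs_le_length_right (u v : List α) : lcs u v ≤ v.length := by
  obtain ⟨s, -, hv, hs⟩ := exists_lcs u v
  exact hs ▸ hv.length_le

theorem lcs_self (u : List α) : lcs u u = u.length :=
  (lcs_le_length_left u u).antisymm (le_lcs (List.Sublist.refl u) (List.Sublist.refl u))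

theorem lcs_eraseIdx_le (u v : List α) (i : ℕ) : lcs (u.eraseIdx i) v ≤ lcs u v := by
  obtain ⟨s, hu, hv, hs⟩ := exists_lcs (u.eraseIdx i) v
  exact hs ▸ le_lcs (hu.trans (u.eraseIdx_sublist i)) hv

theorem lcs_le_lcs_eraseIdx_add_one (u v : List α) (i : ℕ) :
    lcs u v ≤ lcs (u.eraseIdx i) v + 1 := by
  obtain ⟨s, hu, hv, hs⟩ := exists_lcs u v
  obtain ⟨t, hts, htu, hlen⟩ := hu.exists_sublist_sublist_eraseIdx i
  have := le_lcs htu (hts.trans hv)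
  omega

theorem lcs_append_singleton (u v : List α) (a : α) :
    lcs (u ++ [a]) (v ++ [a]) = lcs u v + 1 := by
  apply le_antisymm
  · obtain ⟨s, hu, hv, hs⟩ := exists_lcs (u ++ [a]) (v ++ [a])
    have := le_lcs hu.dropLast_of_append_singleton hv.dropLast_of_append_singleton
    rw [List.length_dropLast] at this
    omega
  · obtain ⟨s, hu, hv, hs⟩ := exists_lcs u v
    simpa [hs] using le_lcs (hu.append (List.Sublist.refl [a])) (hv.append (List.Sublist.refl [a]))

/-- Each edit step changes `|u| - 2 * lcs u v` by at most one. -/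
theorem length_add_length_le_of_reachesIn {m : ℕ} {u v : List α} (h : ReachesIn m u v) :
    u.length + v.length ≤ m + 2 * lcs u v := by
  induction m generalizing u with
  | zero => rw [h.eq_of_zero, lcs_self]; omega
  | succ m ih =>
    obtain ⟨w, hstep, hr⟩ := h.exists_of_succ
    have hw := ih hr
    rcases hstep.eq_or_eraseIdx with rfl | ⟨i, hi, rfl⟩ | ⟨i, hi, rfl⟩
    · omega
    · have := lcs_le_lcs_eraseIdx_add_one w v i
      rw [List.length_eraseIdx_of_lt hi]
      omega
    · have := lcs_eraseIdx_le u v i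
      rw [List.length_eraseIdx_of_lt hi] at hw
      omega

theorem indel_add_two_mul_lcs (u v : List α) : indel u v + 2 * lcs u v = u.length + v.length := by
  have hlow := length_add_length_le_of_reachesIn (reachesIn_indel u v)
  obtain ⟨s, hu, hv, hs⟩ := exists_lcs u v
  have hup := indel_le ((reachesIn_of_sublist hu).trans (reachesIn_of_sublist hv).symm)
  have := lcs_le_length_left u v
  have := lcs_le_length_right u v
  omega

theorem indel_append_singleton (u v : List α) (a : α) :
    indel (u ++ [a]) (v ++ [a]) = indel u v := by
  have h₁ := indel_add_two_mul_lcs (u ++ [a]) (v ++ [a])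
  have h₂ := indel_add_two_mul_lcs u v
  rw [lcs_append_singleton] at h₁
  simp only [List.length_append, List.length_singleton] at h₁
  omega

theorem hh_zero_zero (x y : List α) : hh x y 0 0 = 0 :=
  Nat.le_zero.mp (indel_le (ReachesIn.refl []))

theorem hh_eq_of_getElem?_eq (x y : List α) {i j : ℕ} (hi : 1 ≤ i) (hix : i ≤ x.length)
    (hj : 1 ≤ j) (hjy : j ≤ y.length) (hxy : x[i - 1]? = y[j - 1]?) :
    hh x y i j = hh x y (i - 1) (j - 1) := by
  obtain ⟨i, rfl⟩ := Nat.exists_eq_add_of_le' hi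
  obtain ⟨j, rfl⟩ := Nat.exists_eq_add_of_le' hj
  have hx : x[i]? = some x[i] := List.getElem?_eq_getElem (by omega)
  simp only [Nat.add_sub_cancel] at hxy ⊢
  rw [hh, hh, List.take_add_one, List.take_add_one, ← hxy, hx]
  exact indel_append_singleton _ _ _

theorem IsArc.balance {x y : List α} {p q : ℕ × ℕ} (h : IsArc x y p q) :
    q.1 + (if IsArc1 x y p q then 1 else 0) + (if IsArc2 x y p q then 1 else 0) = p.1 ∧
    q.2 + (if IsArc3 x y p q then 1 else 0) + (if IsArc2 x y p q then 1 else 0) = p.2 ∧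
    hh x y q.1 q.2 + (if IsArc1 x y p q then 1 else 0) + (if IsArc3 x y p q then 1 else 0) =
      hh x y p.1 p.2 := by
  obtain ⟨i, j⟩ := p
  rcases h with h | h | h
  · obtain ⟨hi, -, -, rfl, hstep⟩ := id h
    have h2 : ¬ IsArc2 x y (i, j) (i - 1, j) := fun h' => by
      simp only [IsArc2, Prod.mk.injEq] at h'; omega
    have h3 : ¬ IsArc3 x y (i, j) (i - 1, j) := fun h' => by
      simp only [IsArc3, Prod.mk.injEq] at h'; omega
    simp only [if_pos h, h2, h3, if_false]
    dsimp only at hstep ⊢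
    omega
  · obtain ⟨hi, hix, hj, hjy, rfl, hxy⟩ := id h
    have h1 : ¬ IsArc1 x y (i, j) (i - 1, j - 1) := fun h' => by
      simp only [IsArc1, Prod.mk.injEq] at h'; omega
    have h3 : ¬ IsArc3 x y (i, j) (i - 1, j - 1) := fun h' => by
      simp only [IsArc3, Prod.mk.injEq] at h'; omega
    simp only [if_pos h, h1, h3, if_false, hh_eq_of_getElem?_eq x y hi hix hj hjy hxy]
    omega
  · obtain ⟨-, hj, -, rfl, hstep⟩ := id h
    have h1 : ¬ IsArc1 x y (i, j) (i, j - 1) := fun h' => by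
      simp only [IsArc1, Prod.mk.injEq] at h'; omega
    have h2 : ¬ IsArc2 x y (i, j) (i, j - 1) := fun h' => by
      simp only [IsArc2, Prod.mk.injEq] at h'; omega
    simp only [if_pos h, h1, h2, if_false]
    dsimp only at hstep ⊢
    omega

theorem countArc_cons_cons (A : ℕ × ℕ → ℕ × ℕ → Prop) (p q : ℕ × ℕ) (P : List (ℕ × ℕ)) :
    countArc A (p :: q :: P) = countArc A (q :: P) + if A p q then 1 else 0 := by
  by_cases h : A p q <;> simp [countArc, h]

theorem countArc_telescope {R A B : ℕ × ℕ → ℕ × ℕ → Prop} (φ : ℕ × ℕ → ℕ)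
    (hφ : ∀ p q, R p q → φ q + (if A p q then 1 else 0) + (if B p q then 1 else 0) = φ p) :
    ∀ {P : List (ℕ × ℕ)} {p r : ℕ × ℕ}, P.IsChain R → P.head? = some p → P.getLast? = some r →
      φ r + countArc A P + countArc B P = φ p
  | [_], _, _, _, rfl, rfl => by simp [countArc]
  | p :: q :: P, _, r, hc, rfl, hr => by
    rw [List.isChain_cons_cons] at hc
    have ih := countArc_telescope φ hφ hc.2 rfl (by rwa [List.getLast?_cons_cons] at hr)
    have hpq := hφ p q hc.1
    rw [countArc_cons_cons, countArc_cons_cons]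
    omega

theorem IsPath.counts {x y : List α} {P : List (ℕ × ℕ)} (hP : IsPath x y P) :
    countArc (IsArc1 x y) P + countArc (IsArc2 x y) P = x.length ∧
    countArc (IsArc3 x y) P + countArc (IsArc2 x y) P = y.length ∧
    countArc (IsArc1 x y) P + countArc (IsArc3 x y) P = indel x y := by
  obtain ⟨hc, hhead, hlast⟩ := hP
  have h₁ := countArc_telescope Prod.fst (fun _ _ h => h.balance.1) hc hhead hlast
  have h₂ := countArc_telescope Prod.snd (fun _ _ h => h.balance.2.1) hc hhead hlast
  have h₃ := countArc_telescope (fun p => hh x y p.1 p.2) (fun _ _ h => h.balance.2.2)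
    hc hhead hlast
  rw [hh_zero_zero, hh, List.take_length, List.take_length] at h₃
  omega

theorem map_fst_filter_zipIdx_ne (z : List α) (j k : ℕ) :
    ((z.zipIdx k).filter fun p => p.2 ≠ k + j).map Prod.fst = z.eraseIdx j := by
  induction z generalizing j k with
  | nil => simp
  | cons a z ih =>
    cases j with
    | zero =>
      rw [List.zipIdx_cons, List.filter_cons_of_neg (by simp), List.filter_eq_self.mpr]
      · simp
      · intro p hp
        have := List.le_snd_of_mem_zipIdx hp
        exact decide_eq_true (by omega)
    | succ j =>
      rw [List.zipIdx_cons, List.filter_cons_of_pos (by simp), List.map_cons,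
        List.eraseIdx_cons_succ, ← ih j (k + 1), Nat.add_right_comm, Nat.add_assoc]

theorem delF_singleton (z : List α) {j : ℕ} (hj : 1 ≤ j) : delF z {j} = z.eraseIdx (j - 1) := by
  rw [← map_fst_filter_zipIdx_ne z (j - 1) 0, delF, List.filter_map, List.map_map]
  congr 1
  apply List.filter_congr
  intro p _
  simp only [Function.comp_apply, Prod.fst_swap, Finset.mem_singleton, decide_eq_decide]
  omega

theorem length_eq_and_indel_le_two_of_mem_L1 {x y : List α} (hy : y ∈ L1 x) :
    y.length = x.length ∧ indel x y ≤ 2 := by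
  obtain ⟨-, s, -, hs, a, j, hj, hjs, rfl⟩ := hy
  set z := x.insertIdx (s - 1) a
  have hz : z.length = x.length + 1 := List.length_insertIdx_of_le_length (by omega) a
  have hjz : j - 1 < z.length := by omega
  rw [delF_singleton z hj, List.length_eraseIdx_of_lt hjz, hz]
  refine ⟨rfl, indel_le ?_⟩
  exact ReachesIn.cons (Or.inl ⟨s - 1, a, rfl⟩)
    (ReachesIn.cons (editStep_eraseIdx hjz) (ReachesIn.refl _))

theorem ncard_eq_one_of_countArc_eq_one {A : ℕ × ℕ → ℕ × ℕ → Prop}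
    (g : (ℕ × ℕ) × (ℕ × ℕ) → ℕ) {P : List (ℕ × ℕ)} (h : countArc A P = 1) :
    {i | ∃ pq ∈ P.zip P.tail, A pq.1 pq.2 ∧ g pq = i}.ncard = 1 := by
  rw [countArc, List.countP_eq_length_filter, List.length_eq_one_iff] at h
  obtain ⟨pq₀, hpq₀⟩ := h
  have hmem : ∀ pq, pq ∈ P.zip P.tail ∧ A pq.1 pq.2 ↔ pq = pq₀ := fun pq => by
    simpa using congrArg (pq ∈ ·) hpq₀
  refine Set.ncard_eq_one.mpr ⟨g pq₀, Set.ext fun i => ⟨?_, ?_⟩⟩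
  · rintro ⟨pq, hpq, hA, rfl⟩
    rw [(hmem pq).mp ⟨hpq, hA⟩]
    rfl
  · rintro rfl
    exact ⟨pq₀, ((hmem pq₀).mpr rfl).1, ((hmem pq₀).mpr rfl).2, rfl⟩

/-- for `y ∈ L^{(1)}(x)`, every path of `G_{x,y}` contains exactly
one type-1 arc and one type-3 arc; hence `|f_I(P)| = |f_D(P)| = 1`. -/
theorem one_type1_one_type3 {α : Type*} (x y : List α) (hy : y ∈ L1 x)
    (P : List (ℕ × ℕ)) (hP : IsPath x y P) :
    countArc (IsArc1 x y) P = 1 ∧ countArc (IsArc3 x y) P = 1 ∧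
    (fI x y P).ncard = 1 ∧ (fD x y P).ncard = 1 := by
  obtain ⟨hlen, hle⟩ := length_eq_and_indel_le_two_of_mem_L1 hy
  have hne : indel x y ≠ 0 := fun h => hy.1 (eq_of_indel_eq_zero h).symm
  obtain ⟨hi, hj, hd⟩ := hP.counts
  have h₁ : countArc (IsArc1 x y) P = 1 := by omega
  have h₃ : countArc (IsArc3 x y) P = 1 := by omega
  exact ⟨h₁, h₃, ncard_eq_one_of_countArc_eq_one (fun pq => pq.1.2) h₃,
    ncard_eq_one_of_countArc_eq_one (fun pq => pq.1.1) h₁⟩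
end
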